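/- arXiv:2111.02937 — 5 statements merged into one kernel-verified Lean document; each statement's English description precedes it below -/
import Mathlib

section
/- Let n≥3 and let A be an n×n symmetric 'cyclic' matrix, i.e. A_{ij}=0 whenever 1<|i-j|<n-1, with entries a_i=A_{ii} and b_i=A_{i,i+1} (indices mod n, so b_n=A_{1,n}). If rank(A) ≤ n-3, then at least one b_i equals 0. -/
/-- Taking a submatrix along arbitrary row and column maps can only decrease the rank. -/
lemma rank_submatrix_le' {K : Type*} [Field K] {m l l' : Type*} [Fintype m] [DecidableEq m]
    [Fintype l] [Fintype l'] (A : Matrix m m K) (f : l → m) (g : l' → m) :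
    (A.submatrix f g).rank ≤ A.rank := by
  have h1 : ((1 : Matrix m m K).submatrix f (Equiv.refl m)) * A = A.submatrix f id := by
    rw [Matrix.one_submatrix_mul]
    rfl
  have h2 : (A.submatrix f id) * ((1 : Matrix m m K).submatrix (Equiv.refl m) g)
      = A.submatrix f g := by
    rw [Matrix.mul_submatrix_one]
    simp [Matrix.submatrix_submatrix]
  calc (A.submatrix f g).rank
      = ((((1 : Matrix m m K).submatrix f (Equiv.refl m)) * A)
          * ((1 : Matrix m m K).submatrix (Equiv.refl m) g)).rank := by rw [h1, h2]
    _ ≤ (((1 : Matrix m m K).submatrix f (Equiv.refl m)) * A).rank :=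
        Matrix.rank_mul_le_left _ _
    _ ≤ A.rank := Matrix.rank_mul_le_right _ _

/-- If `A` is an n×n symmetric "cyclic" matrix (supported on the diagonal,
the sub/superdiagonal and the corners) with `rank A ≤ n - 3`, then some cyclically
consecutive off-diagonal entry `b i = A i (i+1)` (indices mod n) vanishes. -/
theorem stmt_1 {K : Type*} [Field K] {n : ℕ} (hn : 3 ≤ n)
    (A : Matrix (Fin n) (Fin n) K) (hsym : A.IsSymm)
    (hband : ∀ i j : Fin n, 1 < ((i : ℤ) - (j : ℤ)).natAbs →
      ((i : ℤ) - (j : ℤ)).natAbs < n - 1 → A i j = 0)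
    (hrank : A.rank ≤ n - 3) :
    ∃ i : Fin n, A i (i + ⟨1, by omega⟩) = 0 := by
  by_contra hc
  push_neg at hc
  -- the submatrix with rows 0..n-3 and columns 1..n-2
  set f : Fin (n - 2) → Fin n := fun i => ⟨i, by omega⟩ with hf
  set g : Fin (n - 2) → Fin n := fun j => ⟨j + 1, by omega⟩ with hg
  set M : Matrix (Fin (n - 2)) (Fin (n - 2)) K := A.submatrix f g with hM
  -- M is lower triangular
  have htri : M.BlockTriangular OrderDual.toDual := by
    intro i j hij
    have hij' : (i : ℕ) < (j : ℕ) := hij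
    apply hband
    · simp only [hf, hg]
      omega
    · simp only [hf, hg]
      omega
  -- diagonal entries of M are nonzero
  have hdiag : ∀ i : Fin (n - 2), M i i ≠ 0 := by
    intro i
    have h1 : f i + (⟨1, by omega⟩ : Fin n) = g i := by
      apply Fin.ext
      have hi := i.isLt
      simp only [hf, hg, Fin.add_def]
      exact Nat.mod_eq_of_lt (by omega)
    have := hc (f i)
    rwa [h1] at this
  have hdet : M.det ≠ 0 := by
    rw [Matrix.det_of_lowerTriangular M htri]
    exact Finset.prod_ne_zero_iff.mpr fun i _ => hdiag i
  have hunit : IsUnit M := (Matrix.isUnit_iff_isUnit_det M).mpr (Ne.isUnit hdet)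
  have hrankM : M.rank = n - 2 := by
    rw [Matrix.rank_of_isUnit M hunit, Fintype.card_fin]
  have hle : M.rank ≤ A.rank := rank_submatrix_le' A f g
  have hcard : A.rank ≤ Fintype.card (Fin n) := Matrix.rank_le_card_width A
  omega
end

section
/- Let n≥4 and let U ⊂ ℂ^n be an (n-2)-dimensional subspace containing no nonzero vector with at most two nonzero coordinates. Then there exists a matrix A in the cyclic linear space L(C_n) (i.e. symmetric with A_{ij}=0 for 1<|i-j|<n-1), unique up to scalar, whose column span equals U; moreover this A has rank n-2. -/
open Module Finset Matrix

/-! ### Auxiliary: the standard (non-conjugated) bilinear form on `Fin n → ℂ` -/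

noncomputable def Bf (n : ℕ) : LinearMap.BilinForm ℂ (Fin n → ℂ) :=
  LinearMap.mk₂ ℂ (fun x y => ∑ i, x i * y i)
    (fun x x' y => by simp [add_mul, Finset.sum_add_distrib])
    (fun c x y => by simp [Finset.mul_sum, mul_assoc])
    (fun x y y' => by simp [mul_add, Finset.sum_add_distrib])
    (fun c x y => by simp [Finset.mul_sum]; ring_nf; simp [mul_assoc, mul_comm, mul_left_comm])

lemma Bf_apply {n : ℕ} (x y : Fin n → ℂ) : Bf n x y = ∑ i, x i * y i := rfl

lemma Bf_symm {n : ℕ} : (Bf n).IsSymm := ⟨fun x y => by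
  simp [Bf_apply, mul_comm]⟩

lemma Bf_refl {n : ℕ} : (Bf n).IsRefl := LinearMap.BilinForm.IsSymm.isRefl Bf_symm

lemma Bf_nondeg {n : ℕ} : (Bf n).Nondegenerate := by
  constructor
  · intro x hx
    funext i
    have := hx (Pi.single i 1)
    simpa [Bf_apply, Pi.single_apply] using this
  · intro x hx
    funext i
    have := hx (Pi.single i 1)
    simpa [Bf_apply, Pi.single_apply] using this

/-! ### Auxiliary : `Fin` arithmetic -/

lemma fin_add_one_val {n : ℕ} [NeZero n] (hn : 2 ≤ n) (i : Fin n) :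
    (i + 1 : Fin n).val = if i.val + 1 = n then 0 else i.val + 1 := by
  have h1 : (1 : Fin n).val = 1 := by
    rw [Fin.val_one', Nat.mod_eq_of_lt (by omega)]
  rw [Fin.add_def, h1]
  have := i.isLt
  split_ifs with h
  · simp [h]
  · simp only [Fin.val_mk]
    rw [Nat.mod_eq_of_lt (by omega)]

lemma fin_sub_one_val {n : ℕ} [NeZero n] (hn : 2 ≤ n) (i : Fin n) :
    (i - 1 : Fin n).val = if i.val = 0 then n - 1 else i.val - 1 := by
  have h1 : (1 : Fin n).val = 1 := by
    rw [Fin.val_one', Nat.mod_eq_of_lt (by omega)]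
  rw [Fin.sub_def, h1]
  have := i.isLt
  split_ifs with h
  · simp only [Fin.val_mk, h]
    rw [Nat.add_zero, Nat.mod_eq_of_lt (by omega)]
  · simp only [Fin.val_mk]
    have h2 : n - 1 + i.val = (i.val - 1) + n := by omega
    rw [h2, Nat.add_mod_right, Nat.mod_eq_of_lt (by omega)]

lemma fin_succ_ne {n : ℕ} [NeZero n] (hn : 2 ≤ n) (i : Fin n) : i + 1 ≠ i := by
  intro h
  have h' := congrArg Fin.val h
  rw [fin_add_one_val hn] at h'
  have := i.isLt
  split_ifs at h' <;> omega

lemma fin_pred_ne {n : ℕ} [NeZero n] (hn : 2 ≤ n) (i : Fin n) : i - 1 ≠ i := by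
  intro h
  have h' := congrArg Fin.val h
  rw [fin_sub_one_val hn] at h'
  have := i.isLt
  split_ifs at h' <;> omega

lemma fin_ne_succ_succ {n : ℕ} [NeZero n] (hn : 3 ≤ n) (i : Fin n) : i ≠ i + 1 + 1 := by
  intro h
  have h' := congrArg Fin.val h
  rw [fin_add_one_val (by omega), fin_add_one_val (by omega)] at h'
  have := i.isLt
  split_ifs at h' <;> omega

lemma fin_pred_ne_succ {n : ℕ} [NeZero n] (hn : 3 ≤ n) (i : Fin n) : i - 1 ≠ i + 1 := by
  intro h
  have h' := congrArg Fin.val h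
  rw [fin_sub_one_val (by omega), fin_add_one_val (by omega)] at h'
  have := i.isLt
  split_ifs at h' <;> omega

lemma fin_pred_add {n : ℕ} (i : Fin n) [NeZero n] : (i - 1) + 1 = i :=
  sub_add_cancel i 1

lemma fin_eq_pred_iff {n : ℕ} [NeZero n] (i x : Fin n) : x = i - 1 ↔ i = x + 1 := by
  constructor
  · rintro rfl; exact (fin_pred_add i).symm
  · rintro rfl; rw [add_sub_cancel_right]

lemma fin_int_cast {n : ℕ} (i : Fin n) : ((i : ℤ)) = ((i.val : ℕ) : ℤ) := rfl

lemma pattern_of_notAdj {n : ℕ} [NeZero n] (hn : 4 ≤ n) {i j : Fin n}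
    (h0 : j ≠ i) (h1 : j ≠ i + 1) (h2 : i ≠ j + 1) :
    1 < ((i : ℤ) - (j : ℤ)).natAbs ∧ ((i : ℤ) - (j : ℤ)).natAbs < n - 1 := by
  have hi := i.isLt; have hj := j.isLt
  have h0' : j.val ≠ i.val := fun h => h0 (Fin.ext h)
  have h1' : j.val ≠ (i + 1 : Fin n).val := fun h => h1 (Fin.ext h)
  have h2' : i.val ≠ (j + 1 : Fin n).val := fun h => h2 (Fin.ext h)
  rw [fin_add_one_val (by omega)] at h1' h2'
  rw [fin_int_cast, fin_int_cast]
  split_ifs at h1' h2' <;> omega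

lemma notAdj_of_pattern {n : ℕ} [NeZero n] (hn : 4 ≤ n) {i j : Fin n}
    (h1 : 1 < ((i : ℤ) - (j : ℤ)).natAbs) (h2 : ((i : ℤ) - (j : ℤ)).natAbs < n - 1) :
    j ≠ i ∧ j ≠ i + 1 ∧ i ≠ j + 1 := by
  have hi := i.isLt; have hj := j.isLt
  rw [fin_int_cast, fin_int_cast] at h1 h2
  refine ⟨?_, ?_, ?_⟩
  · intro h; have := congrArg Fin.val h; omega
  · intro h; have h' := congrArg Fin.val h; rw [fin_add_one_val (by omega)] at h'
    split_ifs at h' <;> omega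
  · intro h; have h' := congrArg Fin.val h; rw [fin_add_one_val (by omega)] at h'
    split_ifs at h' <;> omega

/-! ### Auxiliary sums -/

lemma sum_three {n : ℕ} (a b c : Fin n) (hab : a ≠ b) (hac : a ≠ c) (hbc : b ≠ c)
    (f : Fin n → ℂ) (hf : ∀ x, x ≠ a → x ≠ b → x ≠ c → f x = 0) :
    ∑ x, f x = f a + f b + f c := by
  classical
  have h : ∑ x, f x = ∑ x ∈ ({a, b, c} : Finset (Fin n)), f x := by
    refine (Finset.sum_subset (Finset.subset_univ _) ?_).symm
    intro x _ hx
    simp only [Finset.mem_insert, Finset.mem_singleton, not_or] at hx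
    exact hf x hx.1 hx.2.1 hx.2.2
  rw [h, Finset.sum_insert (by simp [hab, hac]), Finset.sum_insert (by simp [hbc]),
    Finset.sum_singleton, add_assoc]

lemma sum_two {n : ℕ} (a b : Fin n) (hab : a ≠ b)
    (f : Fin n → ℂ) (hf : ∀ x, x ≠ a → x ≠ b → f x = 0) :
    ∑ x, f x = f a + f b := by
  classical
  have h : ∑ x, f x = ∑ x ∈ ({a, b} : Finset (Fin n)), f x := by
    refine (Finset.sum_subset (Finset.subset_univ _) ?_).symm
    intro x _ hx
    simp only [Finset.mem_insert, Finset.mem_singleton, not_or] at hx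
    exact hf x hx.1 hx.2
  rw [h, Finset.sum_insert (by simp [hab]), Finset.sum_singleton]

lemma dep2 (a b c d : ℂ) (h : a * d - b * c = 0) :
    ∃ α β : ℂ, (α ≠ 0 ∨ β ≠ 0) ∧ α * a + β * b = 0 ∧ α * c + β * d = 0 := by
  by_cases ha : a = 0
  · by_cases hb : b = 0
    · by_cases hcd : c = 0 ∧ d = 0
      · exact ⟨1, 0, Or.inl one_ne_zero, by simp [ha], by simp [hcd.1, hcd.2]⟩
      · refine ⟨d, -c, ?_, by rw [ha, hb]; ring, by ring⟩
        rcases not_and_or.mp hcd with hc | hd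
        exacts [Or.inr (by simpa using hc), Or.inl hd]
    · exact ⟨b, -a, Or.inl hb, by ring, by linear_combination -h⟩
  · exact ⟨b, -a, Or.inr (by simpa using ha), by ring, by linear_combination -h⟩

/-! ### Generic facts about matrices supported on the cyclic tridiagonal pattern -/

lemma row_support {n : ℕ} [NeZero n] (hn : 4 ≤ n) (M : Matrix (Fin n) (Fin n) ℂ)
    (hM : ∀ i j : Fin n, 1 < ((i : ℤ) - (j : ℤ)).natAbs →
      ((i : ℤ) - (j : ℤ)).natAbs < n - 1 → M i j = 0)
    {i x : Fin n} (h1 : x ≠ i - 1) (h2 : x ≠ i) (h3 : x ≠ i + 1) : M i x = 0 := by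
  have h1' : i ≠ x + 1 := fun h => h1 ((fin_eq_pred_iff i x).mpr h)
  obtain ⟨g1, g2⟩ := pattern_of_notAdj hn h2 h3 h1'
  exact hM i x g1 g2

lemma row_formula {n : ℕ} [NeZero n] (hn : 4 ≤ n) (M : Matrix (Fin n) (Fin n) ℂ)
    (hM : ∀ i j : Fin n, 1 < ((i : ℤ) - (j : ℤ)).natAbs →
      ((i : ℤ) - (j : ℤ)).natAbs < n - 1 → M i j = 0)
    (v : Fin n → ℂ) (i : Fin n) :
    M.mulVec v i = M i (i - 1) * v (i - 1) + M i i * v i + M i (i + 1) * v (i + 1) := by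
  have : M.mulVec v i = ∑ x, M i x * v x := rfl
  rw [this]
  exact sum_three (i - 1) i (i + 1) (fin_pred_ne (by omega) i)
    (fin_pred_ne_succ (by omega) i) (Ne.symm (fin_succ_ne (by omega) i))
    (fun x => M i x * v x)
    (fun x hx1 hx2 hx3 => by
      show M i x * v x = 0
      rw [row_support hn M hM hx1 hx2 hx3, zero_mul])

/-- Kernel vectors of a cyclic tridiagonal matrix with nonzero superdiagonal are determined
by their first two coordinates. -/
lemma ker_two_dim {n : ℕ} [NeZero n] (hn : 4 ≤ n) (M : Matrix (Fin n) (Fin n) ℂ)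
    (hM : ∀ i j : Fin n, 1 < ((i : ℤ) - (j : ℤ)).natAbs →
      ((i : ℤ) - (j : ℤ)).natAbs < n - 1 → M i j = 0)
    (hoff : ∀ i : Fin n, M i (i + 1) ≠ 0)
    (v : Fin n → ℂ) (hv : M.mulVec v = 0) (h0 : v 0 = 0) (h1 : v 1 = 0) : v = 0 := by
  suffices h : ∀ k (hk : k < n), v ⟨k, hk⟩ = 0 by
    funext j
    have := h j.val j.isLt
    simpa using this
  intro k
  induction k using Nat.strong_induction_on with
  | _ k IH =>
    intro hk
    match k, hk with
    | 0, hk => have : (⟨0, hk⟩ : Fin n) = 0 := rfl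
               rw [this]; exact h0
    | 1, hk => have : (⟨1, hk⟩ : Fin n) = 1 := by
                 apply Fin.ext
                 simp only [Fin.val_mk]
                 rw [Fin.val_one', Nat.mod_eq_of_lt (by omega)]
               rw [this]; exact h1
    | (k+2), hk =>
      set i : Fin n := ⟨k + 1, by omega⟩ with hidef
      have hip : i + 1 = ⟨k + 2, hk⟩ := by
        apply Fin.ext
        rw [fin_add_one_val (by omega)]
        simp only [hidef, Fin.val_mk]
        rw [if_neg (by omega)]
      have him : i - 1 = ⟨k, by omega⟩ := by
        apply Fin.ext
        rw [fin_sub_one_val (by omega)]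
        simp only [hidef, Fin.val_mk]
        rw [if_neg (by omega)]
        omega
      have hrow := congrFun hv i
      rw [row_formula hn M hM v i] at hrow
      rw [hip, him] at hrow
      rw [IH k (by omega) (by omega), IH (k+1) (by omega) (by omega)] at hrow
      have hoffi := hoff i
      rw [hip] at hoffi
      simp only [mul_zero, zero_add, Pi.zero_apply] at hrow
      exact (mul_eq_zero.mp hrow).resolve_left hoffi

/-! ### The matrix construction -/

section Construction

variable {n : ℕ} (w1 w2 : Fin n → ℂ)

def det2 (i j : Fin n) : ℂ := w1 i * w2 j - w1 j * w2 i

def dcyc [NeZero n] (i : Fin n) : ℂ := det2 w1 w2 i (i + 1)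

def Pp [NeZero n] : ℂ := ∏ k, dcyc w1 w2 k

noncomputable def boff [NeZero n] (i : Fin n) : ℂ := Pp w1 w2 / dcyc w1 w2 i

noncomputable def adiag [NeZero n] (i : Fin n) : ℂ :=
  -(Pp w1 w2 * det2 w1 w2 (i - 1) (i + 1)) / (dcyc w1 w2 (i - 1) * dcyc w1 w2 i)

noncomputable def Amat [NeZero n] : Matrix (Fin n) (Fin n) ℂ := fun i j =>
  if j = i then adiag w1 w2 i
  else if j = i + 1 then boff w1 w2 i
  else if i = j + 1 then boff w1 w2 j
  else 0

variable [NeZero n]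

lemma Amat_diag (i : Fin n) : Amat w1 w2 i i = adiag w1 w2 i := by simp [Amat]

lemma Amat_succ (hn : 4 ≤ n) (i : Fin n) : Amat w1 w2 i (i + 1) = boff w1 w2 i := by
  simp [Amat, fin_succ_ne (by omega : 2 ≤ n) i]

lemma Amat_pred (hn : 4 ≤ n) (i : Fin n) : Amat w1 w2 i (i - 1) = boff w1 w2 (i - 1) := by
  simp only [Amat]
  rw [if_neg (fin_pred_ne (by omega) i), if_neg (fin_pred_ne_succ (by omega) i),
    if_pos (fin_pred_add i).symm]

lemma Amat_succ' (hn : 4 ≤ n) (i : Fin n) : Amat w1 w2 (i + 1) i = boff w1 w2 i := by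
  simp only [Amat]
  rw [if_neg (Ne.symm (fin_succ_ne (by omega : 2 ≤ n) i)),
    if_neg (fin_ne_succ_succ (by omega) i)]
  simp

lemma Amat_pattern (hn : 4 ≤ n) : ∀ i j : Fin n, 1 < ((i : ℤ) - (j : ℤ)).natAbs →
    ((i : ℤ) - (j : ℤ)).natAbs < n - 1 → Amat w1 w2 i j = 0 := by
  intro i j h1 h2
  obtain ⟨g0, g1, g2⟩ := notAdj_of_pattern hn h1 h2
  simp [Amat, g0, g1, g2]

lemma Amat_symm (hn : 4 ≤ n) : (Amat w1 w2).IsSymm := by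
  show (Amat w1 w2)ᵀ = Amat w1 w2
  funext i j
  show Amat w1 w2 j i = Amat w1 w2 i j
  by_cases h0 : j = i
  · subst h0; rfl
  · by_cases h1 : j = i + 1
    · subst h1
      rw [Amat_succ w1 w2 hn i, Amat_succ' w1 w2 hn i]
    · by_cases h2 : i = j + 1
      · rw [h2, Amat_succ w1 w2 hn j, Amat_succ' w1 w2 hn j]
      · have hij : ¬ i = j := fun h => h0 h.symm
        simp only [Amat]
        rw [if_neg hij, if_neg h2, if_neg h1, if_neg h0, if_neg h1, if_neg h2]

end Construction

/-! ### Main theorem -/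

/-- For `n ≥ 4` and an `(n-2)`-dimensional subspace `U ⊆ ℂⁿ` containing no
nonzero vector supported on at most two coordinates, there is a matrix `A` in the cyclic
linear space `L(Cₙ)`, unique up to scalar, whose column span is `U`; moreover `rank A = n - 2`. -/
theorem stmt_3 {n : ℕ} (hn : 4 ≤ n) (U : Submodule ℂ (Fin n → ℂ))
    (hdim : Module.finrank ℂ U = n - 2)
    (hU : ∀ v ∈ U, (∃ i j : Fin n, ∀ l : Fin n, l ≠ i → l ≠ j → v l = 0) → v = 0) :
    ∃ A : Matrix (Fin n) (Fin n) ℂ,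
      A.IsSymm ∧
      (∀ i j : Fin n, 1 < ((i : ℤ) - (j : ℤ)).natAbs →
        ((i : ℤ) - (j : ℤ)).natAbs < n - 1 → A i j = 0) ∧
      LinearMap.range A.mulVecLin = U ∧ A.rank = n - 2 ∧
      (∀ A' : Matrix (Fin n) (Fin n) ℂ, A'.IsSymm →
        (∀ i j : Fin n, 1 < ((i : ℤ) - (j : ℤ)).natAbs →
          ((i : ℤ) - (j : ℤ)).natAbs < n - 1 → A' i j = 0) →
        LinearMap.range A'.mulVecLin = U → ∃ c : ℂ, A' = c • A) := by
  classical
  haveI : NeZero n := ⟨by omega⟩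
  set B := Bf n with hBdef
  set W := B.orthogonal U with hWdef
  have hfr : finrank ℂ (Fin n → ℂ) = n := Module.finrank_fin_fun ℂ
  have hWrank : finrank ℂ W = 2 := by
    rw [hWdef, LinearMap.BilinForm.finrank_orthogonal Bf_nondeg U, hfr, hdim]
    omega
  have hUW : B.orthogonal W = U :=
    LinearMap.BilinForm.orthogonal_orthogonal Bf_nondeg Bf_refl U
  -- a basis of W
  obtain ⟨w1, w2, hw1W, hw2W, hspan⟩ :
      ∃ w1 w2 : Fin n → ℂ, w1 ∈ W ∧ w2 ∈ W ∧
        ∀ w ∈ W, ∃ x y : ℂ, ∀ l, w l = x * w1 l + y * w2 l := by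
    obtain bW := Module.finBasisOfFinrankEq ℂ W hWrank
    refine ⟨bW 0, bW 1, (bW 0).2, (bW 1).2, ?_⟩
    intro w hw
    refine ⟨bW.repr ⟨w, hw⟩ 0, bW.repr ⟨w, hw⟩ 1, fun l => ?_⟩
    have := bW.sum_repr ⟨w, hw⟩
    have hcoe := congrArg (Subtype.val) this
    rw [Fin.sum_univ_two] at hcoe
    have := congrFun hcoe l
    simp only [Submodule.coe_add, Submodule.coe_smul, Pi.add_apply, Pi.smul_apply,
      smul_eq_mul] at this
    exact this.symm
  -- any two "columns" of (w1, w2) are independent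
  have hdet : ∀ i j : Fin n, i ≠ j → det2 w1 w2 i j ≠ 0 := by
    intro i j hij hzero
    obtain ⟨α, β, hne, h1, h2⟩ := dep2 (w1 i) (w1 j) (w2 i) (w2 j) hzero
    set v : Fin n → ℂ := fun l => if l = i then α else if l = j then β else 0 with hvdef
    have hvU : v ∈ U := by
      rw [← hUW]
      intro w hw
      show B w v = 0
      rw [Bf_apply]
      obtain ⟨x, y, hxy⟩ := hspan w hw
      rw [sum_two i j hij (fun l => w l * v l)
        (fun l hl1 hl2 => by simp [hvdef, hl1, hl2])]
      have hvi : v i = α := by simp [hvdef]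
      have hvj : v j = β := by simp [hvdef, hij.symm]
      rw [hvi, hvj, hxy i, hxy j]
      linear_combination x * h1 + y * h2
    have hv0 : v = 0 := hU v hvU ⟨i, j, fun l hl1 hl2 => by simp [hvdef, hl1, hl2]⟩
    have hα : α = 0 := by have := congrFun hv0 i; simpa [hvdef] using this
    have hβ : β = 0 := by have := congrFun hv0 j; simpa [hvdef, hij.symm] using this
    rcases hne with h | h <;> [exact h hα; exact h hβ]
  have hd : ∀ i : Fin n, dcyc w1 w2 i ≠ 0 :=
    fun i => hdet i (i + 1) (Ne.symm (fin_succ_ne (by omega) i))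
  have hP : Pp w1 w2 ≠ 0 := Finset.prod_ne_zero_iff.mpr (fun i _ => hd i)
  have hbne : ∀ i : Fin n, boff w1 w2 i ≠ 0 := fun i => div_ne_zero hP (hd i)
  set A := Amat w1 w2 with hAdef
  have hsymm : A.IsSymm := Amat_symm w1 w2 hn
  have hpat : ∀ i j : Fin n, 1 < ((i : ℤ) - (j : ℤ)).natAbs →
      ((i : ℤ) - (j : ℤ)).natAbs < n - 1 → A i j = 0 := Amat_pattern w1 w2 hn
  -- w1, w2 are in the kernel of A
  have hker12 : A.mulVec w1 = 0 ∧ A.mulVec w2 = 0 := by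
    constructor <;>
    · funext i
      rw [row_formula hn A hpat _ i, hAdef, Amat_pred w1 w2 hn i, Amat_diag, Amat_succ w1 w2 hn i]
      have hd1 : w1 (i-1) * w2 i - w1 i * w2 (i-1) ≠ 0 :=
        hdet (i-1) i (fin_pred_ne (by omega) i)
      have hd2 : w1 i * w2 (i+1) - w1 (i+1) * w2 i ≠ 0 := hd i
      show Pp w1 w2 / dcyc w1 w2 (i-1) * _ + -(Pp w1 w2 * det2 w1 w2 (i-1) (i+1)) /
        (dcyc w1 w2 (i-1) * dcyc w1 w2 i) * _ + Pp w1 w2 / dcyc w1 w2 i * _ = (0 : Fin n → ℂ) i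
      simp only [dcyc, det2, fin_pred_add, Pi.zero_apply]
      set p := Pp w1 w2 with hp
      set a1 := w1 (i-1); set a2 := w2 (i-1); set b1 := w1 i; set b2 := w2 i
      set c1 := w1 (i+1); set c2 := w2 (i+1)
      rw [div_mul_eq_mul_div, div_mul_eq_mul_div, div_mul_eq_mul_div,
        div_add_div _ _ hd1 (mul_ne_zero hd1 hd2),
        div_add_div _ _ (mul_ne_zero hd1 (mul_ne_zero hd1 hd2)) hd2, div_eq_zero_iff]
      left; ring
  -- the kernel of A is exactly W
  have hkerW : LinearMap.ker A.mulVecLin = W := by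
    have hle : W ≤ LinearMap.ker A.mulVecLin := by
      intro w hw
      rw [LinearMap.mem_ker, Matrix.mulVecLin_apply]
      obtain ⟨x, y, hxy⟩ := hspan w hw
      have hweq : w = x • w1 + y • w2 := funext fun l => by
        simp [hxy l]
      rw [hweq, Matrix.mulVec_add, Matrix.mulVec_smul, Matrix.mulVec_smul,
        hker12.1, hker12.2]
      simp
    refine (Submodule.eq_of_le_of_finrank_le hle ?_).symm
    rw [hWrank]
    set g : Fin 2 → Fin n := ![0, 1] with hgdef
    set φ : (Fin n → ℂ) →ₗ[ℂ] (Fin 2 → ℂ) := LinearMap.pi (fun p => LinearMap.proj (g p))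
      with hφdef
    set ψ := φ.comp (LinearMap.ker A.mulVecLin).subtype with hψdef
    have hinj : Function.Injective ψ := by
      rw [← LinearMap.ker_eq_bot, Submodule.eq_bot_iff]
      rintro ⟨x, hx⟩ hker
      have hx0 : x 0 = 0 := by
        have h := congrFun (show ψ ⟨x, hx⟩ = 0 from hker) 0
        simpa [hψdef, hφdef, hgdef] using h
      have hx1 : x 1 = 0 := by
        have h := congrFun (show ψ ⟨x, hx⟩ = 0 from hker) 1
        simpa [hψdef, hφdef, hgdef] using h
      have hxker : A.mulVec x = 0 := by
        rw [LinearMap.mem_ker, Matrix.mulVecLin_apply] at hx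
        exact hx
      have hboffA : ∀ i : Fin n, A i (i + 1) ≠ 0 := by
        intro i
        rw [hAdef, Amat_succ w1 w2 hn i]
        exact hbne i
      have := ker_two_dim hn A hpat hboffA x hxker hx0 hx1
      exact Subtype.ext this
    calc finrank ℂ (LinearMap.ker A.mulVecLin)
        ≤ finrank ℂ (Fin 2 → ℂ) := LinearMap.finrank_le_finrank_of_injective hinj
      _ = 2 := Module.finrank_fin_fun ℂ
  -- range of A is U
  have hrangeU : LinearMap.range A.mulVecLin = U := by
    have hle : LinearMap.range A.mulVecLin ≤ U := by
      rintro u ⟨v, rfl⟩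
      rw [Matrix.mulVecLin_apply, ← hUW]
      intro w hw
      show B w (A.mulVec v) = 0
      have hwk : A.mulVec w = 0 := by
        have : w ∈ LinearMap.ker A.mulVecLin := hkerW ▸ hw
        rw [LinearMap.mem_ker, Matrix.mulVecLin_apply] at this
        exact this
      have : B w (A.mulVec v) = dotProduct w (A.mulVec v) := rfl
      rw [this, Matrix.dotProduct_mulVec, ← Matrix.mulVec_transpose, hsymm.eq, hwk,
        zero_dotProduct]
    have hfin := LinearMap.finrank_range_add_finrank_ker A.mulVecLin
    rw [hkerW, hWrank, hfr] at hfin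
    exact Submodule.eq_of_le_of_finrank_eq hle (by rw [hdim]; omega)
  have hrank : A.rank = n - 2 := by
    show finrank ℂ (LinearMap.range A.mulVecLin) = n - 2
    rw [hrangeU, hdim]
  refine ⟨A, hsymm, hpat, hrangeU, hrank, ?_⟩
  -- uniqueness
  intro A' hsym' hpat' hrange'
  have hker' : ∀ w ∈ W, A'.mulVec w = 0 := by
    intro w hw
    apply Bf_nondeg.1
    intro y
    have hy : A'.mulVec y ∈ U := by
      rw [← hrange']
      exact ⟨y, Matrix.mulVecLin_apply _ _⟩
    have h1 : Bf n (A'.mulVec w) y = dotProduct (A'.mulVec w) y := rfl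
    rw [h1, dotProduct_comm, Matrix.dotProduct_mulVec, ← Matrix.mulVec_transpose,
      hsym'.eq]
    exact hw (A'.mulVec y) hy
  set β' : Fin n → ℂ := fun i => A' i (i + 1) with hβ'def
  have hApred : ∀ i : Fin n, A' i (i - 1) = β' (i - 1) := by
    intro i
    rw [hβ'def]
    show A' i (i - 1) = A' (i - 1) ((i - 1) + 1)
    rw [fin_pred_add, hsym'.apply]
  have hrels : ∀ i : Fin n,
      (β' (i-1) * w1 (i-1) + A' i i * w1 i + β' i * w1 (i+1) = 0) ∧
      (β' (i-1) * w2 (i-1) + A' i i * w2 i + β' i * w2 (i+1) = 0) := by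
    intro i
    have e1 := congrFun (hker' w1 hw1W) i
    have e2 := congrFun (hker' w2 hw2W) i
    rw [row_formula hn A' hpat' w1 i] at e1
    rw [row_formula hn A' hpat' w2 i] at e2
    rw [hApred i] at e1 e2
    simp only [Pi.zero_apply] at e1 e2
    exact ⟨e1, e2⟩
  have hxz : ∀ i : Fin n, β' (i-1) * dcyc w1 w2 (i-1) = β' i * dcyc w1 w2 i := by
    intro i
    obtain ⟨e1, e2⟩ := hrels i
    have hrw : dcyc w1 w2 (i - 1) = det2 w1 w2 (i - 1) i := by rw [dcyc, fin_pred_add]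
    rw [hrw]
    simp only [dcyc, det2]
    linear_combination (w2 i) * e1 - (w1 i) * e2
  have hyz : ∀ i : Fin n,
      A' i i * dcyc w1 w2 (i-1) = -(β' i * det2 w1 w2 (i-1) (i+1)) := by
    intro i
    obtain ⟨e1, e2⟩ := hrels i
    have hrw : dcyc w1 w2 (i - 1) = det2 w1 w2 (i - 1) i := by rw [dcyc, fin_pred_add]
    rw [hrw]
    simp only [det2]
    linear_combination (w1 (i-1)) * e2 - (w2 (i-1)) * e1
  have hconst : ∀ i : Fin n, β' i * dcyc w1 w2 i = β' 0 * dcyc w1 w2 0 := by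
    suffices h : ∀ k (hk : k < n), β' ⟨k, hk⟩ * dcyc w1 w2 ⟨k, hk⟩ = β' 0 * dcyc w1 w2 0 by
      intro i
      have := h i.val i.isLt
      simpa using this
    intro k
    induction k with
    | zero => intro hk; rfl
    | succ k IH =>
      intro hk
      have hi : (⟨k+1, hk⟩ : Fin n) - 1 = ⟨k, by omega⟩ := by
        apply Fin.ext
        rw [fin_sub_one_val (by omega)]
        simp
      have h := hxz ⟨k+1, hk⟩
      rw [hi] at h
      rw [← h]
      exact IH (by omega)
  obtain ⟨cc, hccP⟩ : ∃ c : ℂ, ∀ i : Fin n, β' i * dcyc w1 w2 i = c * Pp w1 w2 :=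
    ⟨(β' 0 * dcyc w1 w2 0) / Pp w1 w2, fun i => by
      rw [hconst i, div_mul_cancel₀ _ hP]⟩
  refine ⟨cc, ?_⟩
  funext i j
  show A' i j = (cc • A) i j
  rw [Matrix.smul_apply, smul_eq_mul]
  by_cases h0 : j = i
  · rw [h0, hAdef, Amat_diag, adiag]
    have h1 := hyz i
    have h2 := hccP i
    set q1 := dcyc w1 w2 (i-1) with hq1
    set q2 := dcyc w1 w2 i with hq2
    set e := det2 w1 w2 (i-1) (i+1) with he
    set p := Pp w1 w2 with hp
    have hq1' : q1 ≠ 0 := hd (i-1)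
    have hq2' : q2 ≠ 0 := hd i
    rw [show cc * (-(p * e) / (q1 * q2)) = -(cc * p * e) / (q1 * q2) from by ring,
      eq_div_iff (mul_ne_zero hq1' hq2')]
    linear_combination q2 * h1 - e * h2
  · by_cases h1 : j = i + 1
    · rw [h1, hAdef, Amat_succ w1 w2 hn i, boff]
      have h2 := hccP i
      set q2 := dcyc w1 w2 i with hq2
      set p := Pp w1 w2 with hp
      have hq2' : q2 ≠ 0 := hd i
      show β' i = cc * (p / q2)
      rw [show cc * (p / q2) = (cc * p) / q2 from by ring, eq_div_iff hq2']
      linear_combination h2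
    · by_cases h2 : i = j + 1
      · have hji : j = i - 1 := (fin_eq_pred_iff i j).mpr h2
        rw [hji, hAdef, Amat_pred w1 w2 hn i, boff, hApred i]
        have h3 := hccP (i - 1)
        set q1 := dcyc w1 w2 (i-1) with hq1
        set p := Pp w1 w2 with hp
        have hq1' : q1 ≠ 0 := hd (i-1)
        show β' (i-1) = cc * (p / q1)
        rw [show cc * (p / q1) = (cc * p) / q1 from by ring, eq_div_iff hq1']
        linear_combination h3
      · have hz1 : A' i j = 0 := by
          apply row_support hn A' hpat'
          · intro h; exact h2 ((fin_eq_pred_iff i j).mp h)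
          · exact h0
          · exact h1
        have hz2 : A i j = 0 := by
          rw [hAdef]
          simp only [Amat]
          rw [if_neg h0, if_neg h1, if_neg h2]
        rw [hz1, hz2, mul_zero]
end

section
/- For integers n, r with 0 ≤ r ≤ n-3, the identity ∑_{j=n-1-r}^{n-1} C(2n-2-r, j)·C(j, n-1-r)·C(2n-2-r-j, n-1-r) = (2n-2-r)!·2^r / ((n-r-1)!·(n-r-1)!·r!) holds. -/
lemma aux_term (m r k : ℕ) (hk : k ≤ r) :
    ((2 * m + r).choose (m + k) : ℚ) * ((m + k).choose m : ℚ) *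
      ((m + r - k).choose m : ℚ) =
    ((2 * m + r).factorial : ℚ) * (r.choose k) /
      ((m.factorial : ℚ) * (m.factorial : ℚ) * (r.factorial : ℚ)) := by
  have h1 : m + k ≤ 2 * m + r := by omega
  have h2 : m ≤ m + k := by omega
  have h3 : m ≤ m + r - k := by omega
  rw [Nat.cast_choose ℚ h1, Nat.cast_choose ℚ h2, Nat.cast_choose ℚ h3,
    Nat.cast_choose ℚ hk]
  have e1 : 2 * m + r - (m + k) = m + r - k := by omega
  have e2 : m + k - m = k := by omega
  have e3 : m + r - k - m = r - k := by omega
  rw [e1, e2, e3]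
  have f1 : ((m + k).factorial : ℚ) ≠ 0 := Nat.cast_ne_zero.mpr (Nat.factorial_ne_zero _)
  have f2 : ((m + r - k).factorial : ℚ) ≠ 0 := Nat.cast_ne_zero.mpr (Nat.factorial_ne_zero _)
  have f3 : (m.factorial : ℚ) ≠ 0 := Nat.cast_ne_zero.mpr (Nat.factorial_ne_zero _)
  have f4 : (k.factorial : ℚ) ≠ 0 := Nat.cast_ne_zero.mpr (Nat.factorial_ne_zero _)
  have f5 : ((r - k).factorial : ℚ) ≠ 0 := Nat.cast_ne_zero.mpr (Nat.factorial_ne_zero _)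
  have f6 : (r.factorial : ℚ) ≠ 0 := Nat.cast_ne_zero.mpr (Nat.factorial_ne_zero _)
  field_simp

/-- For `0 ≤ r ≤ n - 3`,
`∑_{j=n-1-r}^{n-1} C(2n-2-r,j)·C(j,n-1-r)·C(2n-2-r-j,n-1-r)
  = (2n-2-r)!·2^r / ((n-r-1)!·(n-r-1)!·r!)`. -/
theorem stmt_5 (n r : ℕ) (hr : r + 3 ≤ n) :
    (∑ j ∈ Finset.Icc (n - 1 - r) (n - 1),
        (((2 * n - 2 - r).choose j : ℚ) * (j.choose (n - 1 - r) : ℚ) *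
          ((2 * n - 2 - r - j).choose (n - 1 - r) : ℚ))) =
      ((2 * n - 2 - r).factorial : ℚ) * 2 ^ r /
        (((n - r - 1).factorial : ℚ) * ((n - r - 1).factorial : ℚ) * (r.factorial : ℚ)) := by
  set m := n - 1 - r with hm
  have hA : n - 1 = m + r := by omega
  have hB : 2 * n - 2 - r = 2 * m + r := by omega
  have hC : n - r - 1 = m := by omega
  rw [hA, hB, hC]
  have hmap : Finset.Icc m (m + r) = (Finset.range (r + 1)).map (addLeftEmbedding m) := by
    ext x
    simp only [Finset.mem_Icc, Finset.mem_map, Finset.mem_range, addLeftEmbedding_apply]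
    constructor
    · intro h
      exact ⟨x - m, by omega, by omega⟩
    · rintro ⟨k, hk, rfl⟩
      omega
  rw [hmap, Finset.sum_map]
  simp only [addLeftEmbedding_apply]
  have : ∀ k ∈ Finset.range (r + 1),
      (((2 * m + r).choose (m + k) : ℚ) * ((m + k).choose m : ℚ) *
        ((2 * m + r - (m + k)).choose m : ℚ)) =
      ((2 * m + r).factorial : ℚ) * (r.choose k) /
        ((m.factorial : ℚ) * (m.factorial : ℚ) * (r.factorial : ℚ)) := by
    intro k hk
    rw [Finset.mem_range] at hk
    have hk' : k ≤ r := by omega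
    have e : 2 * m + r - (m + k) = m + r - k := by omega
    rw [e]
    exact aux_term m r k hk'
  rw [Finset.sum_congr rfl this, ← Finset.sum_div, ← Finset.mul_sum,
    ← Nat.cast_sum, Nat.sum_range_choose]
  push_cast
  ring
end

section
/- Define q(m) = ((m+2)/4)·C(2m,m) − 3·2^{2m-3}, F(n,r) = q(n-r)·2^{r+1}·n·(2n-r-1)!/(2n-2r)! for 0 ≤ r ≤ n-2 and F(n,r)=0 otherwise, and H(n,r) = (2n-r-2)!·n·2^{r-1}/((n-r)!·(n-r-1)!) for 0 ≤ r ≤ n-3 and H(n,r)=0 otherwise. Then for all n ≥ 4 and 0 ≤ r ≤ n-3: F(n,r) = (2nr/(n-1))·F(n-1,r-1) + (1/(n-r))·F(n,r+1) + ((n-r-2)/(n-r))·H(n,r). -/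
/-- `q(m) = ((m+2)/4)·C(2m,m) − 3·2^{2m-3}`. -/
def qDeg (m : ℕ) : ℚ :=
  ((m : ℚ) + 2) / 4 * ((2 * m).choose m : ℚ) - 3 * 2 ^ (2 * m - 3)

/-- `F(n,r) = q(n-r)·2^{r+1}·n·(2n-r-1)!/(2n-2r)!` for `0 ≤ r ≤ n-2`, and `0` otherwise. -/
def FDeg (n r : ℕ) : ℚ :=
  if r + 2 ≤ n then
    qDeg (n - r) * 2 ^ (r + 1) * n * ((2 * n - r - 1).factorial : ℚ) /
      ((2 * n - 2 * r).factorial : ℚ)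
  else 0

/-- `H(n,r) = (2n-r-2)!·n·2^{r-1}/((n-r)!·(n-r-1)!)` for `0 ≤ r ≤ n-3`, and `0` otherwise. -/
def HDeg (n r : ℕ) : ℚ :=
  if r + 3 ≤ n then
    ((2 * n - r - 2).factorial : ℚ) * n * (2 : ℚ) ^ ((r : ℤ) - 1) /
      (((n - r).factorial : ℚ) * ((n - r - 1).factorial : ℚ))
  else 0

lemma choose_cast (a b : ℕ) (h : b ≤ a) :
    ((a.choose b : ℚ)) = (a.factorial : ℚ) / (b.factorial * (a - b).factorial) := by
  rw [eq_div_iff (by positivity)]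
  push_cast [← Nat.choose_mul_factorial_mul_factorial h]
  ring

lemma qKey (k : ℕ) : qDeg (k+3) =
    4 * qDeg (k+2) + ((k:ℚ)+1) * ((2*k+4).factorial : ℚ) /
      (2 * ((k+3).factorial : ℚ) * ((k+2).factorial : ℚ)) := by
  have e1 : ((2*k+6).factorial : ℚ) = (2*(k:ℚ)+6)*(2*(k:ℚ)+5)*((2*k+4).factorial : ℚ) := by
    rw [show 2*k+6 = (2*k+4)+1+1 from by omega]
    push_cast [Nat.factorial_succ]; ring
  have e2 : ((k+3).factorial : ℚ) = ((k:ℚ)+3)*((k+2).factorial : ℚ) := by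
    rw [show k+3 = (k+2)+1 from rfl]
    push_cast [Nat.factorial_succ]; ring
  unfold qDeg
  rw [show 2*(k+3) = 2*k+6 from by ring, show 2*(k+2) = 2*k+4 from by ring,
    show 2*k+6-3 = 2*k+1+2 from by omega, show 2*k+4-3 = 2*k+1 from by omega,
    choose_cast (2*k+6) (k+3) (by omega), choose_cast (2*k+4) (k+2) (by omega),
    show 2*k+6-(k+3) = k+3 from by omega, show 2*k+4-(k+2) = k+2 from by omega,
    e1, e2, pow_add]
  have h1 : ((k+2).factorial : ℚ) ≠ 0 := by positivity
  push_cast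
  field_simp
  ring

/-- the recurrence
`F(n,r) = (2nr/(n-1))·F(n-1,r-1) + (1/(n-r))·F(n,r+1) + ((n-r-2)/(n-r))·H(n,r)`
for `n ≥ 4` and `0 ≤ r ≤ n-3` (for `r = 0` the first term vanishes). -/
theorem stmt_7 (n r : ℕ) (hn : 4 ≤ n) (hr : r + 3 ≤ n) :
    FDeg n r =
      (2 * (n : ℚ) * (r : ℚ) / ((n : ℚ) - 1)) * FDeg (n - 1) (r - 1) +
        (1 / ((n : ℚ) - (r : ℚ))) * FDeg n (r + 1) +
        (((n : ℚ) - (r : ℚ) - 2) / ((n : ℚ) - (r : ℚ))) * HDeg n r := by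
  obtain ⟨k, rfl⟩ : ∃ k, n = r + k + 3 := ⟨n - r - 3, by omega⟩
  have e1 : ((2*k+6).factorial : ℚ) = (2*(k:ℚ)+6)*(2*(k:ℚ)+5)*((2*k+4).factorial : ℚ) := by
    rw [show 2*k+6 = (2*k+4)+1+1 from by omega]
    push_cast [Nat.factorial_succ]; ring
  have e2 : ((k+3).factorial : ℚ) = ((k:ℚ)+3)*((k+2).factorial : ℚ) := by
    rw [show k+3 = (k+2)+1 from rfl]
    push_cast [Nat.factorial_succ]; ring
  have e3 : ((2*k+5).factorial : ℚ) = (2*(k:ℚ)+5) * ((2*k+4).factorial : ℚ) := by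
    rw [show 2*k+5 = (2*k+4)+1 from rfl]
    push_cast [Nat.factorial_succ]; ring
  have hf1 : ((2*k+4).factorial : ℚ) ≠ 0 := by positivity
  have hf2 : ((k+2).factorial : ℚ) ≠ 0 := by positivity
  have hk3 : (k:ℚ) + 3 ≠ 0 := by positivity
  rcases r with _ | s
  · -- r = 0
    simp only [Nat.cast_zero, mul_zero, zero_div, zero_mul, zero_add]
    simp only [FDeg, HDeg]
    rw [if_pos (by omega : 0 + 2 ≤ k + 3), if_pos (by omega : 1 + 2 ≤ k + 3),
      if_pos (by omega : 0 + 3 ≤ k + 3)]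
    rw [show 2*(k+3) - 0 - 1 = 2*k+5 from by omega,
      show 2*(k+3) - 2*0 = 2*k+6 from by omega,
      show k+3 - 0 = k+3 from by omega,
      show 2*(k+3) - 1 - 1 = 2*k+4 from by omega,
      show 2*(k+3) - 2*1 = 2*k+4 from by omega,
      show k+3 - 1 = k+2 from by omega,
      show 2*k+6 - 2 = 2*k+4 from by omega,
      show (2:ℚ)^(((0:ℕ):ℤ)-1) = 1/2 from by norm_num,
      qKey k, e1, e2, e3]
    push_cast
    field_simp
    ring
  · -- r = s + 1
    rw [show s+1+k+3-1 = s+k+3 from by omega, show s+1-1 = s from by omega]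
    simp only [FDeg, HDeg]
    rw [if_pos (by omega : s + 1 + 2 ≤ s + 1 + k + 3),
      if_pos (by omega : s + 2 ≤ s + k + 3),
      if_pos (by omega : s + 1 + 1 + 2 ≤ s + 1 + k + 3),
      if_pos (by omega : s + 1 + 3 ≤ s + 1 + k + 3)]
    have es : ((s+2*k+6).factorial : ℚ) = ((s:ℚ)+2*k+6) * ((s+2*k+5).factorial : ℚ) := by
      rw [show s+2*k+6 = (s+2*k+5)+1 from rfl]
      push_cast [Nat.factorial_succ]; ring
    rw [show 2*(s+1+k+3) - (s+1) - 1 = s+2*k+6 from by omega,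
      show 2*(s+1+k+3) - 2*(s+1) = 2*k+6 from by omega,
      show s+1+k+3 - (s+1) = k+3 from by omega,
      show 2*(s+k+3) - s - 1 = s+2*k+5 from by omega,
      show 2*(s+k+3) - 2*s = 2*k+6 from by omega,
      show s+k+3 - s = k+3 from by omega,
      show 2*(s+1+k+3) - (s+1+1) - 1 = s+2*k+5 from by omega,
      show 2*(s+1+k+3) - 2*(s+1+1) = 2*k+4 from by omega,
      show s+1+k+3 - (s+1+1) = k+2 from by omega,
      show 2*(s+1+k+3) - (s+1) - 2 = s+2*k+5 from by omega,
      show k+3 - 1 = k+2 from by omega,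
      show (2:ℚ)^((((s+1:ℕ)):ℤ)-1) = 2^s from by
        rw [show (((s+1:ℕ)):ℤ)-1 = (s:ℤ) from by push_cast; ring, zpow_natCast],
      qKey k, e1, e2, es]
    have c1 : ((s+1+k+3 : ℕ) : ℚ) - 1 = (s:ℚ)+k+3 := by push_cast; ring
    have c2 : ((s+1+k+3 : ℕ) : ℚ) - ((s+1:ℕ):ℚ) = (k:ℚ)+3 := by push_cast; ring
    rw [c1, c2]
    have hs : (s:ℚ)+k+3 ≠ 0 := by positivity
    have hfs : ((s+2*k+5).factorial : ℚ) ≠ 0 := by positivity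
    push_cast
    field_simp
    ring
end

section
/- Let n ≥ 4. If A ∈ L(C_n) is singular and some cyclic off-diagonal entry b_i = A_{i,i+1} vanishes, then there is a cyclic rotation/reflection σ of the indices such that σ(A) is in block form of type T=(t_1,...,t_k), meaning: b_n(σ(A))=0, and the indices z_1<...<z_k=n with b_{z_j}=0 can be chosen so that each tridiagonal block B_j (on indices z_{j-1}+1,...,z_j, of size t_j) has rank t_j − 1. -/
open Matrix

noncomputable section StmtAux

section RankHelpers
variable {l m : Type*} [Fintype l] [Fintype m] [DecidableEq l] [DecidableEq m]

lemma det_ne_zero_iff_rank_eq (M : Matrix m m ℂ) :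
    M.det ≠ 0 ↔ M.rank = Fintype.card m := by
  constructor
  · intro h
    exact Matrix.rank_of_isUnit M (Matrix.isUnit_iff_isUnit_det M |>.mpr (isUnit_iff_ne_zero.mpr h))
  · intro h hd
    have h1 : Function.Surjective M.mulVec := by
      have : LinearMap.range M.mulVecLin = ⊤ := by
        apply Submodule.eq_top_of_finrank_eq
        rw [← Matrix.rank, h, Module.finrank_pi]
      intro y
      obtain ⟨x, hx⟩ := (LinearMap.range_eq_top.mp this) y
      exact ⟨x, hx⟩
    have := (Matrix.mulVec_surjective_iff_isUnit.mp h1)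
    exact ((Matrix.isUnit_iff_isUnit_det M).mp this).ne_zero hd

private def prodSubEquiv {M N : Type*} [AddCommGroup M] [AddCommGroup N]
    [Module ℂ M] [Module ℂ N] (p : Submodule ℂ M) (q : Submodule ℂ N) :
    (p.prod q) ≃ₗ[ℂ] p × q where
  toFun x := (⟨x.1.1, x.2.1⟩, ⟨x.1.2, x.2.2⟩)
  invFun y := ⟨(y.1.1, y.2.1), ⟨y.1.2, y.2.2⟩⟩
  map_add' _ _ := rfl
  map_smul' _ _ := rfl
  left_inv _ := rfl
  right_inv _ := rfl

lemma rank_fromBlocks_diag (A : Matrix l l ℂ) (D : Matrix m m ℂ) :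
    (fromBlocks A 0 0 D).rank = A.rank + D.rank := by
  classical
  set e := LinearEquiv.sumArrowLequivProdArrow l m ℂ ℂ with he
  have key : (fromBlocks A 0 0 D).mulVecLin
      = (e.symm.toLinearMap) ∘ₗ ((A.mulVecLin.prodMap D.mulVecLin) ∘ₗ (e : (l ⊕ m → ℂ) →ₗ[ℂ] _)) := by
    apply LinearMap.ext; intro x; funext i
    cases i <;>
      simp [Matrix.mulVecLin_apply, Matrix.fromBlocks_mulVec, he,
        LinearEquiv.sumArrowLequivProdArrow, Equiv.sumArrowEquivProdArrow, Function.comp]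
  have hrangeProd : LinearMap.range (A.mulVecLin.prodMap D.mulVecLin)
      = (LinearMap.range A.mulVecLin).prod (LinearMap.range D.mulVecLin) := by
    ext ⟨a, b⟩
    simp only [LinearMap.mem_range, Submodule.mem_prod, LinearMap.prodMap_apply, Prod.ext_iff]
    constructor
    · rintro ⟨⟨x, y⟩, hx, hy⟩; exact ⟨⟨x, hx⟩, ⟨y, hy⟩⟩
    · rintro ⟨⟨x, hx⟩, ⟨y, hy⟩⟩; exact ⟨⟨x, y⟩, hx, hy⟩
  rw [Matrix.rank, key]
  rw [LinearMap.range_comp]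
  rw [LinearEquiv.finrank_map_eq]
  rw [LinearMap.range_comp_of_range_eq_top _ (LinearEquiv.range e)]
  rw [hrangeProd]
  rw [(prodSubEquiv _ _).finrank_eq, Module.finrank_prod]
  rfl

lemma rank_submatrix_le'_s11 {a : Type*} [Fintype a] [DecidableEq a]
    (M : Matrix m m ℂ) (f g : a → m) :
    (M.submatrix f g).rank ≤ M.rank := by
  have h1 : M.submatrix f g
      = ((1 : Matrix m m ℂ).submatrix f (Equiv.refl m)) * M
        * ((1 : Matrix m m ℂ).submatrix (Equiv.refl m) g) := by
    rw [Matrix.one_submatrix_mul, Matrix.mul_submatrix_one]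
    simp
  rw [h1]
  exact le_trans (Matrix.rank_mul_le _ _) (le_trans (min_le_left _ _) (le_trans (Matrix.rank_mul_le _ _) (min_le_right _ _)))
end RankHelpers

section Intervals
variable {m : ℕ}

abbrev Ico' (m a b : ℕ) := {i : Fin m // a ≤ (i : ℕ) ∧ (i : ℕ) < b}


def BS (M : Matrix (Fin m) (Fin m) ℂ) (a b : ℕ) : Matrix (Ico' m a b) (Ico' m a b) ℂ :=
  M.submatrix (fun x => x.1) (fun x => x.1)

def eItv (m a b : ℕ) (hab : a ≤ b) (hbm : b ≤ m) : Fin (b - a) ≃ Ico' m a b where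
  toFun i := ⟨⟨a + i.1, by have := i.2; omega⟩,
    by show a ≤ a + i.1 ∧ a + i.1 < b; have := i.2; omega⟩
  invFun x := ⟨x.1.1 - a, by have := x.2; omega⟩
  left_inv i := by apply Fin.ext; simp
  right_inv x := by
    apply Subtype.ext; apply Fin.ext; have := x.2; simp; omega

lemma card_Ico' (m a b : ℕ) (hab : a ≤ b) (hbm : b ≤ m) :
    Fintype.card (Ico' m a b) = b - a := by
  rw [← Fintype.card_fin (b - a)]; exact (Fintype.card_congr (eItv m a b hab hbm)).symm

def eSplitSum (m a p b : ℕ) (hap : a ≤ p) (hpb : p ≤ b) :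
    (Ico' m a p ⊕ Ico' m p b) ≃ Ico' m a b where
  toFun := Sum.elim (fun x => ⟨x.1, x.2.1, lt_of_lt_of_le x.2.2 hpb⟩)
    (fun x => ⟨x.1, le_trans hap x.2.1, x.2.2⟩)
  invFun x := if h : (x.1 : ℕ) < p then Sum.inl ⟨x.1, x.2.1, h⟩
    else Sum.inr ⟨x.1, le_of_not_gt h, x.2.2⟩
  left_inv x := by
    cases x with
    | inl x => exact dif_pos x.2.2
    | inr x => exact dif_neg (Nat.not_lt.mpr x.2.1)
  right_inv x := by
    by_cases h : (x.1 : ℕ) < p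
    · show Sum.elim _ _ (dite _ _ _) = x
      rw [dif_pos h]; rfl
    · show Sum.elim _ _ (dite _ _ _) = x
      rw [dif_neg h]; rfl

lemma BS_split_blocks (M : Matrix (Fin m) (Fin m) ℂ) (a p b : ℕ) (hap : a ≤ p) (hpb : p ≤ b)
    (hz : ∀ i j : Fin m, a ≤ (i : ℕ) → (i : ℕ) < p → p ≤ (j : ℕ) → (j : ℕ) < b →
      M i j = 0 ∧ M j i = 0) :
    (BS M a b).submatrix (eSplitSum m a p b hap hpb) (eSplitSum m a p b hap hpb)
      = fromBlocks (BS M a p) 0 0 (BS M p b) := by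
  ext i j
  cases i with
  | inl i => cases j with
    | inl j => rfl
    | inr j => simpa [BS, eSplitSum, fromBlocks] using (hz i.1 j.1 i.2.1 i.2.2 j.2.1 j.2.2).1
  | inr i => cases j with
    | inl j => simpa [BS, eSplitSum, fromBlocks] using (hz j.1 i.1 j.2.1 j.2.2 i.2.1 i.2.2).2
    | inr j => rfl

lemma BS_split_rank (M : Matrix (Fin m) (Fin m) ℂ) (a p b : ℕ) (hap : a ≤ p) (hpb : p ≤ b)
    (hz : ∀ i j : Fin m, a ≤ (i : ℕ) → (i : ℕ) < p → p ≤ (j : ℕ) → (j : ℕ) < b →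
      M i j = 0 ∧ M j i = 0) :
    (BS M a b).rank = (BS M a p).rank + (BS M p b).rank := by
  rw [← Matrix.rank_submatrix (BS M a b) (eSplitSum m a p b hap hpb) (eSplitSum m a p b hap hpb),
    BS_split_blocks M a p b hap hpb hz, rank_fromBlocks_diag]

lemma BS_split_det (M : Matrix (Fin m) (Fin m) ℂ) (a p b : ℕ) (hap : a ≤ p) (hpb : p ≤ b)
    (hz : ∀ i j : Fin m, a ≤ (i : ℕ) → (i : ℕ) < p → p ≤ (j : ℕ) → (j : ℕ) < b →
      M i j = 0 ∧ M j i = 0) :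
    (BS M a b).det = (BS M a p).det * (BS M p b).det := by
  rw [← Matrix.det_submatrix_equiv_self (eSplitSum m a p b hap hpb) (BS M a b),
    BS_split_blocks M a p b hap hpb hz, Matrix.det_fromBlocks_zero₂₁]

def eFull (m : ℕ) : Ico' m 0 m ≃ Fin m :=
  ⟨fun x => x.1, fun i => ⟨i, Nat.zero_le _, i.2⟩, fun x => rfl, fun i => rfl⟩

lemma det_BS_full (M : Matrix (Fin m) (Fin m) ℂ) : (BS M 0 m).det = M.det := by
  have h : BS M 0 m = M.submatrix (eFull m) (eFull m) := by ext i j; rfl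
  rw [h, Matrix.det_submatrix_equiv_self]

lemma rank_BS_full (M : Matrix (Fin m) (Fin m) ℂ) : (BS M 0 m).rank = M.rank := by
  have h : BS M 0 m = M.submatrix (eFull m) (eFull m) := by ext i j; rfl
  rw [h, Matrix.rank_submatrix]

def shiftM (M : Matrix (Fin m) (Fin m) ℂ) (p : ℕ) : Matrix (Fin (m - p)) (Fin (m - p)) ℂ :=
  fun i j => M ⟨p + i.1, by have := i.2; omega⟩ ⟨p + j.1, by have := j.2; omega⟩

def eShift (m p a b : ℕ) (hb : b ≤ m - p) : Ico' (m - p) a b ≃ Ico' m (p + a) (p + b) where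
  toFun x := ⟨⟨p + x.1.1, by have := x.1.2; omega⟩,
    by show p + a ≤ p + x.1.1 ∧ p + x.1.1 < p + b; have := x.2; omega⟩
  invFun y := ⟨⟨y.1.1 - p, by have h1 := y.1.2; have h2 := y.2; omega⟩,
    by show a ≤ y.1.1 - p ∧ y.1.1 - p < b; have := y.2; omega⟩
  left_inv x := by apply Subtype.ext; apply Fin.ext; simp
  right_inv y := by apply Subtype.ext; apply Fin.ext; have := y.2; simp; omega

lemma BS_shift_eq (M : Matrix (Fin m) (Fin m) ℂ) (p a b : ℕ) (hb : b ≤ m - p) :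
    BS (shiftM M p) a b
      = (BS M (p + a) (p + b)).submatrix (eShift m p a b hb) (eShift m p a b hb) := by
  ext i j; rfl

lemma rank_BS_shift (M : Matrix (Fin m) (Fin m) ℂ) (p a b : ℕ) (hb : b ≤ m - p) :
    (BS (shiftM M p) a b).rank = (BS M (p + a) (p + b)).rank := by
  rw [BS_shift_eq M p a b hb, Matrix.rank_submatrix]

lemma det_BS_shift (M : Matrix (Fin m) (Fin m) ℂ) (p : ℕ) (hb : m - p ≤ m - p) :
    (BS (shiftM M p) 0 (m - p)).det = (BS M (p + 0) (p + (m - p))).det := by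
  rw [BS_shift_eq M p 0 (m - p) hb, Matrix.det_submatrix_equiv_self]
end Intervals

lemma eItv_apply (m a b : ℕ) (hab : a ≤ b) (hbm : b ≤ m) (i : Fin (b - a)) :
    ((eItv m a b hab hbm i).1 : ℕ) = a + i.1 := rfl

section Bounds
variable {m : ℕ} (M : Matrix (Fin m) (Fin m) ℂ)

lemma rank_BS_le (a b : ℕ) (hab : a ≤ b) (hbm : b ≤ m) : (BS M a b).rank ≤ b - a := by
  have := Matrix.rank_le_card_width (BS M a b)
  rwa [card_Ico' m a b hab hbm] at this

lemma rank_BS_of_det_eq_zero (a b : ℕ) (hab : a ≤ b) (hbm : b ≤ m)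
    (h : (BS M a b).det = 0) : (BS M a b).rank ≤ b - a - 1 := by
  have h1 := rank_BS_le M a b hab hbm
  have h2 : ¬ (BS M a b).rank = b - a := by
    intro hr
    exact (det_ne_zero_iff_rank_eq (BS M a b)).mpr (by rw [card_Ico' m a b hab hbm]; exact hr) h
  omega

lemma rank_BS_of_det_ne_zero (a b : ℕ) (hab : a ≤ b) (hbm : b ≤ m)
    (h : (BS M a b).det ≠ 0) : (BS M a b).rank = b - a := by
  have := (det_ne_zero_iff_rank_eq (BS M a b)).mp h
  rwa [card_Ico' m a b hab hbm] at this

/-- atoms have rank at least size - 1 -/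
lemma rank_BS_atom (hsym : M.IsSymm) (htri : ∀ i j : Fin m, (i : ℕ) + 1 < (j : ℕ) → M i j = 0)
    (a b : ℕ) (hab : a ≤ b) (hbm : b ≤ m)
    (hnz : ∀ r, a < r → (hr : r < b) → M ⟨r - 1, by omega⟩ ⟨r, by omega⟩ ≠ 0) :
    b - a - 1 ≤ (BS M a b).rank := by
  rcases Nat.eq_or_lt_of_le hab with h | hlt
  · simp [← h]
  set q := b - a with hq
  -- the minor with rows 1..q-1 and cols 0..q-2 of the block
  set f : Fin (q - 1) → Ico' m a b := fun i =>
    eItv m a b hab hbm ⟨i.1 + 1, by have := i.2; omega⟩ with hf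
  set g : Fin (q - 1) → Ico' m a b := fun j =>
    eItv m a b hab hbm ⟨j.1, by have := j.2; omega⟩ with hg
  set N := (BS M a b).submatrix f g with hN
  have hNentry : ∀ i j : Fin (q - 1),
      N i j = M ⟨a + (i.1 + 1), by have := i.2; omega⟩ ⟨a + j.1, by have := j.2; omega⟩ := by
    intro i j
    show M (eItv m a b hab hbm ⟨i.1+1, _⟩).1 (eItv m a b hab hbm ⟨j.1, _⟩).1 = _
    congr 1 <;> apply Fin.ext <;> rw [eItv_apply]
  have htriN : N.BlockTriangular id := by
    intro i j hij
    have hij' : (j : ℕ) < (i : ℕ) := hij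
    rw [hNentry, hsym.apply]
    exact htri _ _ (show (a + j.1) + 1 < a + (i.1 + 1) by omega)
  have hdetN : N.det ≠ 0 := by
    rw [Matrix.det_of_upperTriangular htriN]
    apply Finset.prod_ne_zero_iff.mpr
    intro i _
    rw [hNentry]
    have h0 := hnz (a + i.1 + 1) (by omega) (by have := i.2; omega)
    rw [hsym.apply]
    have he : (⟨a + i.1, by have := i.2; omega⟩ : Fin m) = ⟨a + i.1 + 1 - 1, by have := i.2; omega⟩ :=
      Fin.ext (by show a + i.1 = a + i.1 + 1 - 1; omega)
    rw [he]
    exact h0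
  have hrN : N.rank = q - 1 := by
    have := (det_ne_zero_iff_rank_eq N).mp hdetN
    rwa [Fintype.card_fin] at this
  calc q - 1 = N.rank := hrN.symm
    _ ≤ (BS M a b).rank := rank_submatrix_le'_s11 _ f g
end Bounds

lemma split_zeros {m : ℕ} (M : Matrix (Fin m) (Fin m) ℂ) (hsym : M.IsSymm)
    (htri : ∀ i j : Fin m, (i : ℕ) + 1 < (j : ℕ) → M i j = 0)
    (p : ℕ) (hp : 0 < p) (hpm : p < m)
    (h0 : M ⟨p - 1, by omega⟩ ⟨p, hpm⟩ = 0) :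
    ∀ i j : Fin m, (i : ℕ) < p → p ≤ (j : ℕ) → M i j = 0 ∧ M j i = 0 := by
  intro i j hi hj
  suffices h : M i j = 0 by
    refine ⟨h, ?_⟩; rw [hsym.apply]; exact h
  rcases lt_or_ge ((i : ℕ) + 1) (j : ℕ) with h | h
  · exact htri i j h
  · have hi' : i = ⟨p - 1, by omega⟩ := Fin.ext (show (i : ℕ) = p - 1 by omega)
    have hj' : j = ⟨p, hpm⟩ := Fin.ext (show (j : ℕ) = p by omega)
    rw [hi', hj']; exact h0

def Decomp (m : ℕ) (M : Matrix (Fin m) (Fin m) ℂ) (k : ℕ) (w : ℕ → ℕ) : Prop :=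
  (∀ j, j < k → w j < w (j + 1)) ∧ w 0 = 0 ∧ w k = m ∧
  (∀ j, 0 < j → j < k → ∃ h : w j < m, M ⟨w j - 1, by omega⟩ ⟨w j, h⟩ = 0) ∧
  (∀ j, j < k → (BS M (w j) (w (j + 1))).rank = (w (j + 1) - w j) - 1)

lemma wmono {k : ℕ} {w : ℕ → ℕ} (h : ∀ j, j < k → w j < w (j + 1)) :
    ∀ a b, a < b → b ≤ k → w a < w b := by
  intro a b
  induction b with
  | zero => omega
  | succ n ih =>
    intro hab hnk
    rcases Nat.lt_succ_iff_lt_or_eq.mp hab with h' | h'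
    · exact lt_trans (ih h' (by omega)) (h n (by omega))
    · subst h'; exact h a (by omega)

lemma wmono' {k : ℕ} {w : ℕ → ℕ} (h : ∀ j, j < k → w j < w (j + 1)) :
    ∀ a b, a ≤ b → b ≤ k → w a ≤ w b := by
  intro a b hab hbk
  rcases Nat.eq_or_lt_of_le hab with h' | h'
  · rw [h']
  · exact le_of_lt (wmono h a b h' hbk)

lemma core : ∀ m : ℕ, ∀ M : Matrix (Fin m) (Fin m) ℂ, 0 < m → M.IsSymm →
    (∀ i j : Fin m, (i : ℕ) + 1 < (j : ℕ) → M i j = 0) → M.det = 0 →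
    ∃ k w, 0 < k ∧ Decomp m M k w := by
  intro m
  induction m using Nat.strong_induction_on with
  | _ m IH =>
  intro M hm hsym htri hdet
  set P : ℕ → Prop := fun p => ∃ h2 : p < m, 0 < p ∧ M ⟨p - 1, by omega⟩ ⟨p, h2⟩ = 0 with hPdef
  have : DecidablePred P := fun _ => Classical.dec _
  by_cases hP : ∃ p, P p
  case neg =>
    -- whole matrix is a single atom
    have hatom : ∀ r, 0 < r → (hr : r < m) → M ⟨r - 1, by omega⟩ ⟨r, by omega⟩ ≠ 0 := by
      intro r h1 hr hz
      exact hP ⟨r, hr, h1, hz⟩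
    refine ⟨1, fun j => if j = 0 then 0 else m, one_pos, ?_, ?_, ?_, ?_, ?_⟩
    · intro j hj
      have hj0 : j = 0 := by omega
      subst hj0
      show (0 : ℕ) < m
      exact hm
    · rfl
    · rfl
    · intro j h1 h2; omega
    · intro j hj
      have hj0 : j = 0 := by omega
      subst hj0
      show (BS M 0 m).rank = m - 0 - 1
      have hub := rank_BS_of_det_eq_zero M 0 m (by omega) le_rfl
        (by rw [det_BS_full]; exact hdet)
      have hlb := rank_BS_atom M hsym htri 0 m (by omega) le_rfl
        (fun r h1 hr => hatom r (by omega) hr)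
      omega
  case pos =>
    set p := Nat.find hP with hp
    obtain ⟨hpm, hp0, hpz⟩ := Nat.find_spec hP
    have hmin : ∀ r, 0 < r → r < p → (hr : r < m) → M ⟨r - 1, by omega⟩ ⟨r, hr⟩ ≠ 0 := by
      intro r h1 h2 hr hz
      exact Nat.find_min hP h2 ⟨hr, h1, hz⟩
    have hzeros := split_zeros M hsym htri p hp0 hpm hpz
    have hsplitz : ∀ i j : Fin m, 0 ≤ (i : ℕ) → (i : ℕ) < p → p ≤ (j : ℕ) → (j : ℕ) < m →
        M i j = 0 ∧ M j i = 0 := fun i j _ h2 h3 _ => hzeros i j h2 h3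
    have hdetTB : (BS M 0 p).det * (BS M p m).det = 0 := by
      rw [← BS_split_det M 0 p m (by omega) (le_of_lt hpm) hsplitz, det_BS_full]
      exact hdet
    have hpm' : p ≤ m := le_of_lt hpm
    set MB := shiftM M p with hMB
    have hsymB : MB.IsSymm := by
      show MBᵀ = MB
      ext i j
      rw [Matrix.transpose_apply]
      exact hsym.apply _ _
    have htriB : ∀ i j : Fin (m - p), (i : ℕ) + 1 < (j : ℕ) → MB i j = 0 := by
      intro i j hij
      exact htri _ _ (show p + i.1 + 1 < p + j.1 by omega)
    have hdetB_eq : MB.det = (BS M p m).det := by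
      rw [← det_BS_full MB, hMB, det_BS_shift M p le_rfl]
      rw [Nat.add_zero, Nat.add_sub_cancel' hpm']
    by_cases hdetB : (BS M p m).det = 0
    case pos =>
      obtain ⟨k', w', hk', hmono', hw0, hwk, hbrk, hrank⟩ :=
        IH (m - p) (by omega) MB (by omega) hsymB htriB (by rw [hdetB_eq]; exact hdetB)
      have hw'le : ∀ j, j ≤ k' → w' j ≤ m - p := by
        intro j hj
        calc w' j ≤ w' k' := wmono' hmono' j k' hj le_rfl
        _ = m - p := hwk
      have hrankT : ∀ j, j < k' →
          (BS M (p + w' j) (p + w' (j + 1))).rank = (w' (j + 1) - w' j) - 1 := by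
        intro j hj
        rw [← rank_BS_shift M p _ _ (hw'le (j + 1) (by omega))]
        exact hrank j hj
      have hbrkT : ∀ j, 0 < j → j < k' → ∃ h : p + w' j < m,
          M ⟨p + w' j - 1, by omega⟩ ⟨p + w' j, h⟩ = 0 := by
        intro j h0 hk
        obtain ⟨h, hz⟩ := hbrk j h0 hk
        have hwj1 : 1 ≤ w' j := by have := wmono hmono' 0 j h0 (le_of_lt hk); omega
        have hz' : M ⟨p + (w' j - 1), by omega⟩ ⟨p + w' j, by omega⟩ = 0 := hz
        refine ⟨by omega, ?_⟩
        have he : (⟨p + (w' j - 1), by omega⟩ : Fin m) = ⟨p + w' j - 1, by omega⟩ :=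
          Fin.ext (show p + (w' j - 1) = p + w' j - 1 by omega)
        rw [← he]
        exact hz'
      by_cases hdetT : (BS M 0 p).det = 0
      case pos =>
        refine ⟨k' + 1, fun j => if j = 0 then 0 else p + w' (j - 1), by omega,
          ?_, rfl, ?_, ?_, ?_⟩
        · intro j hj
          cases j with
          | zero =>
            show (0 : ℕ) < p + w' 0
            omega
          | succ i =>
            show p + w' i < p + w' (i + 1)
            exact Nat.add_lt_add_left (hmono' i (by omega)) p
        · show p + w' k' = m
          rw [hwk]; omega
        · intro j h0 hk
          rcases Nat.eq_or_lt_of_le (show 1 ≤ j by omega) with h1 | h1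
          · have hj1 : j = 1 := h1.symm
            subst hj1
            have hv : (if (1 : ℕ) = 0 then 0 else p + w' (1 - 1)) = p := by
              show p + w' 0 = p
              rw [hw0]
              omega
            simp only [hv]
            exact ⟨hpm, hpz⟩
          · have hv : (if j = 0 then 0 else p + w' (j - 1)) = p + w' (j - 1) :=
              if_neg (by omega)
            simp only [hv]
            exact hbrkT (j - 1) (by omega) (by omega)
        · intro j hj
          cases j with
          | zero =>
            show (BS M 0 (p + w' 0)).rank = (p + w' 0 - 0) - 1
            rw [hw0]
            rw [Nat.add_zero]
            have hub := rank_BS_of_det_eq_zero M 0 p (by omega) hpm' hdetT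
            have hlb := rank_BS_atom M hsym htri 0 p (by omega) hpm'
              (fun r h1 hr => hmin r h1 hr (by omega))
            omega
          | succ i =>
            show (BS M (p + w' i) (p + w' (i + 1))).rank
              = ((p + w' (i + 1)) - (p + w' i)) - 1
            have := hrankT i (by omega)
            omega
      case neg =>
        have hk'1 : 1 ≤ k' := hk'
        refine ⟨k', fun j => if j = 0 then 0 else p + w' j, hk', ?_, rfl, ?_, ?_, ?_⟩
        · intro j hj
          cases j with
          | zero =>
            show (0 : ℕ) < p + w' 1
            omega
          | succ i =>
            show p + w' (i + 1) < p + w' (i + 1 + 1)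
            exact Nat.add_lt_add_left (hmono' (i + 1) (by omega)) p
        · show (if k' = 0 then 0 else p + w' k') = m
          rw [if_neg (show ¬ k' = 0 by omega), hwk]
          omega
        · intro j h0 hk
          have hv : (if j = 0 then 0 else p + w' j) = p + w' j := if_neg (by omega)
          simp only [hv]
          exact hbrkT j h0 hk
        · intro j hj
          cases j with
          | zero =>
            show (BS M 0 (p + w' 1)).rank = (p + w' 1 - 0) - 1
            have hw1 : 1 ≤ w' 1 := by have := wmono hmono' 0 1 one_pos hk'1; omega
            have hsp : ∀ i j : Fin m, 0 ≤ (i : ℕ) → (i : ℕ) < p → p ≤ (j : ℕ) →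
                (j : ℕ) < p + w' 1 → M i j = 0 ∧ M j i = 0 :=
              fun i j _ h2 h3 _ => hzeros i j h2 h3
            rw [BS_split_rank M 0 p (p + w' 1) (by omega) (by omega) hsp]
            have h1 : (BS M 0 p).rank = p := by
              have := rank_BS_of_det_ne_zero M 0 p (by omega) hpm' hdetT
              omega
            have h2 : (BS M p (p + w' 1)).rank = w' 1 - 1 := by
              have h3 := hrankT 0 hk'1
              rw [hw0, Nat.add_zero] at h3
              simp only [Nat.zero_add] at h3
              rw [h3]
              omega
            omega
          | succ i =>
            show (BS M (p + w' (i + 1)) (p + w' (i + 1 + 1))).rank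
              = ((p + w' (i + 1 + 1)) - (p + w' (i + 1))) - 1
            have := hrankT (i + 1) (by omega)
            omega
    case neg =>
      have hdetT : (BS M 0 p).det = 0 := by
        rcases mul_eq_zero.mp hdetTB with h | h
        · exact h
        · exact absurd h hdetB
      refine ⟨1, fun j => if j = 0 then 0 else m, one_pos, ?_, rfl, rfl, ?_, ?_⟩
      · intro j hj
        have hj0 : j = 0 := by omega
        subst hj0
        show (0 : ℕ) < m
        exact hm
      · intro j h1 h2; omega
      · intro j hj
        have hj0 : j = 0 := by omega
        subst hj0
        show (BS M 0 m).rank = m - 0 - 1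
        rw [BS_split_rank M 0 p m (by omega) hpm' hsplitz]
        have h1ub := rank_BS_of_det_eq_zero M 0 p (by omega) hpm' hdetT
        have h1lb := rank_BS_atom M hsym htri 0 p (by omega) hpm'
          (fun r h1 hr => hmin r h1 hr (by omega))
        have h2 := rank_BS_of_det_ne_zero M p m hpm' le_rfl hdetB
        omega

end StmtAux

lemma mod_small (a n : ℕ) (h : a < 2 * n) (h0 : 0 < n) :
    (a < n ∧ a % n = a) ∨ (n ≤ a ∧ a % n = a - n) := by
  rcases lt_or_ge a n with h' | h'
  · exact Or.inl ⟨h', Nat.mod_eq_of_lt h'⟩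
  · right
    refine ⟨h', ?_⟩
    rw [Nat.mod_eq_sub_mod h']
    exact Nat.mod_eq_of_lt (by omega)

/-- Membership in the cyclic linear space `L(Cₙ)`: symmetric and supported on the
diagonal, the sub/superdiagonal and the two corners. -/
def cyclicBand {n : ℕ} (A : Matrix (Fin n) (Fin n) ℂ) : Prop :=
  A.IsSymm ∧ ∀ i j : Fin n, 1 < ((i : ℤ) - (j : ℤ)).natAbs →
    ((i : ℤ) - (j : ℤ)).natAbs < n - 1 → A i j = 0

/-- `σ` belongs to the dihedral group `Dₙ ⊆ Sₙ` acting on `Fin n`: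
it is a rotation `i ↦ i + c` or a reflection `i ↦ c - i`. -/
def isDihedral {n : ℕ} (σ : Equiv.Perm (Fin n)) : Prop :=
  ∃ c : Fin n, (∀ i, σ i = i + c) ∨ (∀ i, σ i = c - i)

/-- `A` (of size `n = z (last)`) is in block form with breakpoints
`0 = z 0 < z 1 < ⋯ < z k = n`: the cyclic off-diagonal entries `b_{z j}` vanish
(in particular `b n = A (n-1) 0 = 0`), and each tridiagonal block `B j`, the principal
submatrix on indices `z (j-1), …, z j - 1`, has rank equal to its size minus one. -/
def blockForm {n : ℕ} [NeZero n] (A : Matrix (Fin n) (Fin n) ℂ)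
    (k : ℕ) (z : Fin (k + 1) → ℕ) : Prop :=
  StrictMono z ∧ z 0 = 0 ∧ z (Fin.last k) = n ∧
    (∀ j : Fin k,
      A ⟨(z j.succ - 1) % n, Nat.mod_lt _ (Nat.pos_of_neZero n)⟩
        ⟨z j.succ % n, Nat.mod_lt _ (Nat.pos_of_neZero n)⟩ = 0) ∧
    (∀ j : Fin k,
      (A.submatrix
          (fun x : {i : Fin n // z j.castSucc ≤ (i : ℕ) ∧ (i : ℕ) < z j.succ} => (x : Fin n))
          (fun x : {i : Fin n // z j.castSucc ≤ (i : ℕ) ∧ (i : ℕ) < z j.succ} => (x : Fin n))).rank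
        = (z j.succ - z j.castSucc) - 1)

set_option maxHeartbeats 1000000 in
/-- if `A ∈ L(Cₙ)` is singular and some cyclic off-diagonal entry
`b i = A i (i+1)` vanishes, then after acting by a suitable element of the dihedral
group the matrix is in block form of some type `T = (t₁,…,t_k)`. -/
theorem stmt_11 {n : ℕ} [NeZero n] (hn : 4 ≤ n) (A : Matrix (Fin n) (Fin n) ℂ)
    (hA : cyclicBand A) (hsing : A.det = 0)
    (hzero : ∃ i : Fin n, A i (i + ⟨1, by omega⟩) = 0) :
    ∃ σ : Equiv.Perm (Fin n), isDihedral σ ∧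
      ∃ (k : ℕ) (z : Fin (k + 1) → ℕ), 0 < k ∧ blockForm (A.submatrix σ σ) k z := by
  obtain ⟨i₀, hi₀⟩ := hzero
  have hn0 : 0 < n := by omega
  set one' : Fin n := ⟨1, by omega⟩ with hone
  set c : Fin n := i₀ + one' with hc
  set σ : Equiv.Perm (Fin n) := Equiv.addRight c with hσ
  set M : Matrix (Fin n) (Fin n) ℂ := A.submatrix σ σ with hM
  have hMapp : ∀ i j : Fin n, M i j = A (i + c) (j + c) := fun i j => rfl
  have hcval : (c : ℕ) = (i₀.1 + 1) % n := rfl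
  have hi₀lt : i₀.1 < n := i₀.2
  -- corner entries
  have hadd1 : (⟨n - 1, by omega⟩ : Fin n) + c = i₀ := by
    apply Fin.ext
    show ((n - 1) + c.1) % n = i₀.1
    rw [hcval]
    rcases mod_small (i₀.1 + 1) n (by omega) hn0 with ⟨h1, h2⟩ | ⟨h1, h2⟩ <;> rw [h2]
    · rcases mod_small ((n - 1) + (i₀.1 + 1)) n (by omega) hn0 with ⟨g1, g2⟩ | ⟨g1, g2⟩ <;>
        rw [g2] <;> omega
    · rcases mod_small ((n - 1) + (i₀.1 + 1 - n)) n (by omega) hn0 with ⟨g1, g2⟩ | ⟨g1, g2⟩ <;>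
        rw [g2] <;> omega
  have hadd2 : (⟨0, hn0⟩ : Fin n) + c = i₀ + one' := by
    apply Fin.ext
    show (0 + c.1) % n = ((i₀ + one' : Fin n) : ℕ)
    rw [Nat.zero_add, Nat.mod_eq_of_lt c.2]
  have hcorner : M ⟨n - 1, by omega⟩ ⟨0, hn0⟩ = 0 := by
    rw [hMapp, hadd1, hadd2]
    exact hi₀
  have hsymM : M.IsSymm := by
    rw [hM]
    show (A.submatrix σ σ)ᵀ = A.submatrix σ σ
    rw [Matrix.transpose_submatrix, hA.1]
  have hcorner' : M ⟨0, hn0⟩ ⟨n - 1, by omega⟩ = 0 := by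
    rw [hsymM.apply]
    exact hcorner
  have htriM : ∀ i j : Fin n, (i : ℕ) + 1 < (j : ℕ) → M i j = 0 := by
    intro i j hij
    by_cases hcor : (i : ℕ) = 0 ∧ (j : ℕ) = n - 1
    · have hi : i = ⟨0, hn0⟩ := Fin.ext hcor.1
      have hj : j = ⟨n - 1, by omega⟩ := Fin.ext hcor.2
      rw [hi, hj]
      exact hcorner'
    · rw [hMapp]
      apply hA.2
      all_goals {
        have hx : ((i + c : Fin n) : ℕ) = (i.1 + c.1) % n := rfl
        have hy : ((j + c : Fin n) : ℕ) = (j.1 + c.1) % n := rfl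
        have hXZ : (((i + c : Fin n)) : ℤ) = (((i + c : Fin n) : ℕ) : ℤ) := rfl
        have hYZ : (((j + c : Fin n)) : ℤ) = (((j + c : Fin n) : ℕ) : ℤ) := rfl
        rw [hXZ, hYZ, hx, hy]
        have hi2 : i.1 < n := i.2
        have hj2 : j.1 < n := j.2
        have hc2 : c.1 < n := c.2
        have hij2 : ¬((i : ℕ) = 0 ∧ (j : ℕ) = n - 1) := hcor
        rcases mod_small (i.1 + c.1) n (by omega) hn0 with ⟨ha1, ha2⟩ | ⟨ha1, ha2⟩ <;>
          rcases mod_small (j.1 + c.1) n (by omega) hn0 with ⟨hb1, hb2⟩ | ⟨hb1, hb2⟩ <;>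
            rw [ha2, hb2] <;> omega
      }
  have hdetM : M.det = 0 := by
    rw [hM]
    show (A.submatrix (⇑σ) (⇑σ)).det = 0
    rw [Matrix.det_submatrix_equiv_self]
    exact hsing
  obtain ⟨k, w, hk, hmono, hw0, hwk, hbrk, hrank⟩ := core n M hn0 hsymM htriM hdetM
  refine ⟨σ, ⟨c, Or.inl fun i => rfl⟩, k, fun j => w j.1, hk, ?_, ?_, ?_, ?_, ?_⟩
  · intro a b hab
    exact wmono hmono a.1 b.1 hab (Nat.lt_succ_iff.mp b.2)
  · show w ((0 : Fin (k + 1)) : ℕ) = 0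
    rw [Fin.val_zero]
    exact hw0
  · show w ((Fin.last k : Fin (k + 1)) : ℕ) = n
    rw [Fin.val_last]
    exact hwk
  · intro j
    show M ⟨(w (j.1 + 1) - 1) % n, _⟩ ⟨w (j.1 + 1) % n, _⟩ = 0
    rcases Nat.lt_or_ge (j.1 + 1) k with hjk | hjk
    · obtain ⟨h, hz⟩ := hbrk (j.1 + 1) (by omega) hjk
      have hw1 : 1 ≤ w (j.1 + 1) := by
        have := wmono hmono 0 (j.1 + 1) (by omega) (by omega)
        omega
      have e1 : (⟨(w (j.1 + 1) - 1) % n, Nat.mod_lt _ hn0⟩ : Fin n)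
          = ⟨w (j.1 + 1) - 1, by omega⟩ :=
        Fin.ext (show (w (j.1 + 1) - 1) % n = w (j.1 + 1) - 1 from Nat.mod_eq_of_lt (by omega))
      have e2 : (⟨w (j.1 + 1) % n, Nat.mod_lt _ hn0⟩ : Fin n) = ⟨w (j.1 + 1), h⟩ :=
        Fin.ext (show w (j.1 + 1) % n = w (j.1 + 1) from Nat.mod_eq_of_lt h)
      rw [e1, e2]
      exact hz
    · have hjk' : j.1 + 1 = k := by have := j.2; omega
      have hwn : w (j.1 + 1) = n := by rw [hjk']; exact hwk
      simp only [hwn]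
      have e1 : (⟨(n - 1) % n, Nat.mod_lt _ hn0⟩ : Fin n) = ⟨n - 1, by omega⟩ :=
        Fin.ext (show (n - 1) % n = n - 1 from Nat.mod_eq_of_lt (by omega))
      have e2 : (⟨n % n, Nat.mod_lt _ hn0⟩ : Fin n) = ⟨0, hn0⟩ :=
        Fin.ext (show n % n = 0 from Nat.mod_self n)
      rw [e1, e2]
      exact hcorner
  · intro j
    exact hrank j.1 j.2
end
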